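/- arXiv:2205.08078 — 2 statements merged into one kernel-verified Lean document; each statement's English description precedes it below -/
import Mathlib

section
/- Suppose the Gram matrices G_i := X_iᵀ X_i are all block diagonal with a common partition of {1,…,d} into B consecutive index blocks of sizes d_1,…,d_B (i.e. G_i[k,ℓ] = 0 whenever k and ℓ lie in different blocks, for all i), and let G_i^{(b)} ∈ ℝ^{d_b×d_b} denote the b-th diagonal block. For each m, let p_SA(m) be the infimum over W_{1j} ∈ ℝ^{d×d} and W_{2j} ∈ ℝ^{d×c} (j = 1,…,m) of Σ_{i=1}^n L(Σ_{j=1}^m (X_i W_{1j} X_iᵀ) X_i W_{2j}, Y_i) + (β/2) Σ_{j=1}^m (‖W_{1j}‖_F² + ‖W_{2j}‖_F²). Then there exists m* ≤ min{d², dc} such that for every m ≥ m*, p_SA(m) equals the infimum over matrices Z^{(b)} ∈ ℝ^{d_b d × d_b c} (b = 1,…,B) of Σ_{i=1}^n L(Σ_{b=1}^B Σ_{k=1}^{d_b} Σ_{ℓ=1}^{d_b} G_i^{(b)}[k,ℓ] · X_i Z^{(b,k,ℓ)}, Y_i) + β Σ_{b=1}^B ‖Z^{(b)}‖_*, where Z^{(b,k,ℓ)}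 ∈ ℝ^{d×c} consists of rows (k−1)d+1,…,kd and columns (ℓ−1)c+1,…,ℓc of Z^{(b)}. -/
open Matrix Pointwise Kronecker

noncomputable section

/-- Frobenius norm of a real matrix. -/
def frobNorm {m n : Type*} [Fintype m] [Fintype n] (A : Matrix m n ℝ) : ℝ :=
  Real.sqrt (∑ i, ∑ j, (A i j) ^ 2)

/-- Nuclear norm of a real matrix: the sum of its singular values, i.e. the square
roots of the eigenvalues of `Aᴴ * A`. -/
def nuclearNorm {m n : Type*} [Fintype m] [Fintype n] [DecidableEq n] (A : Matrix m n ℝ) : ℝ :=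
  ∑ i, Real.sqrt ((Matrix.isHermitian_conjTranspose_mul_self A).eigenvalues i)

/-- The constrained nuclear norm `‖Z‖_{*,K}`. -/
def cNuclearNorm {N ι κ : Type*} [Fintype N] [Fintype ι] [Fintype κ] [DecidableEq κ]
    (K : Matrix N ι ℝ) (Z : Matrix ι κ ℝ) : ℝ :=
  sInf {t : ℝ | 0 ≤ t ∧ Z ∈ t • convexHull ℝ
    {M : Matrix ι κ ℝ | ∃ u v, M = Matrix.vecMulVec u v ∧ (∀ r, 0 ≤ (K *ᵥ u) r) ∧
      nuclearNorm M ≤ 1}}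

/-- The 0-1 diagonal matrix `diag(1{A u ≥ 0})`. -/
def gateArr {N q : Type*} [Fintype q] [DecidableEq N] (A : Matrix N q ℝ) (u : q → ℝ) :
    Matrix N N ℝ :=
  Matrix.diagonal fun r => if 0 ≤ (A *ᵥ u) r then (1 : ℝ) else 0

/-- The set of hyperplane arrangements of a matrix `A`. -/
def arrSet {N q : Type*} [Fintype q] [DecidableEq N] (A : Matrix N q ℝ) :
    Set (Matrix N N ℝ) :=
  Set.range (gateArr A)

/-- Entrywise ReLU of a matrix. -/
def reluM {m n : Type*} (A : Matrix m n ℝ) : Matrix m n ℝ :=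
  Matrix.of fun i j => max (A i j) 0

/-- Entrywise ReLU of a vector. -/
def reluV {m : Type*} (v : m → ℝ) : m → ℝ := fun i => max (v i) 0

/-- `circ(X)`: horizontal concatenation of all circulant row-shifts of `X`. -/
def circM {s p : ℕ} (X : Matrix (Fin s) (Fin p) ℝ) : Matrix (Fin s) (Fin s × Fin p) ℝ :=
  Matrix.of fun i q => X (i + q.1) q.2

/-!
Block-diagonality of `Xᵢᵀ Xᵢ` makes `Xᵢ W₁ⱼ Xᵢᵀ Xᵢ W₂ⱼ` depend on the weights only through the
`B` matrices `Z_b = U_b V_bᵀ`, where column `j` of `U_b` (resp. `V_b`) is the `b`-th row block of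
`W₁ⱼᵀ` (resp. `W₂ⱼ`), flattened; moreover `Σⱼ ‖W₁ⱼ‖_F² + ‖W₂ⱼ‖_F² = Σ_b ‖U_b‖_F² + ‖V_b‖_F²`.
The nonconvex problem is therefore the factored (Burer–Monteiro) form of the convex one, and the
two infima agree by the variational formula `‖Z‖_* = min_{U Vᵀ = Z} (‖U‖_F² + ‖V‖_F²) / 2`.
The lower bound pairs `U Vᵀ` against the left singular vectors of `Z` and uses AM-GM and Bessel's
inequality; the minimum is attained by the balanced SVD factorization, whose inner dimension
`min(rows, cols) ≤ m` fits into the `m` heads.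
-/

section RealMatrix

variable {m n p : Type*} [Fintype m] [Fintype n] [Fintype p]

lemma frobNorm_sq (M : Matrix m n ℝ) : frobNorm M ^ 2 = ∑ i, ∑ j, M i j ^ 2 :=
  Real.sq_sqrt (by positivity)

lemma frobNorm_sq_eq_trace (M : Matrix m n ℝ) : frobNorm M ^ 2 = trace (Mᵀ * M) := by
  rw [frobNorm_sq, trace, Finset.sum_comm]
  simp [Matrix.mul_apply, sq]

lemma frobNorm_nonneg (M : Matrix m n ℝ) : 0 ≤ frobNorm M := Real.sqrt_nonneg _

lemma two_mul_trace_transpose_mul_le (M N : Matrix m n ℝ) :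
    2 * trace (Mᵀ * N) ≤ frobNorm M ^ 2 + frobNorm N ^ 2 := by
  have h := frobNorm_sq_eq_trace (M - N) ▸ sq_nonneg (frobNorm (M - N))
  have hNM : trace (Nᵀ * M) = trace (Mᵀ * N) := by
    rw [← trace_transpose, transpose_mul, transpose_transpose]
  simp only [transpose_sub, Matrix.sub_mul, Matrix.mul_sub, trace_sub, hNM] at h
  rw [frobNorm_sq_eq_trace, frobNorm_sq_eq_trace]
  linarith

lemma frobNorm_transpose (M : Matrix m n ℝ) : frobNorm Mᵀ = frobNorm M := by
  rw [frobNorm, frobNorm, Finset.sum_comm]; rfl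

lemma frobNorm_mul_of_mul_transpose_eq_one [DecidableEq n] (M : Matrix m n ℝ)
    {P : Matrix n p ℝ} (hP : P * Pᵀ = 1) : frobNorm (M * P) = frobNorm M := by
  rw [← sq_eq_sq₀ (frobNorm_nonneg _) (frobNorm_nonneg _), frobNorm_sq_eq_trace,
    frobNorm_sq_eq_trace, transpose_mul, Matrix.mul_assoc, trace_mul_comm, Matrix.mul_assoc,
    Matrix.mul_assoc, hP, Matrix.mul_one]

lemma exists_mul_transpose_eq_one [DecidableEq n] (h : Fintype.card n ≤ Fintype.card p) :
    ∃ P : Matrix n p ℝ, P * Pᵀ = 1 := by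
  classical
  obtain ⟨e⟩ := Function.Embedding.nonempty_iff_card_le.mpr h
  refine ⟨(1 : Matrix p p ℝ).submatrix e id, ?_⟩
  rw [transpose_submatrix, transpose_one, ← submatrix_mul _ _ _ id _ Function.bijective_id,
    Matrix.mul_one, submatrix_one_embedding]

/-- If `Mᵀ * M` is diagonal, every column of `M` on which the diagonal vanishes is zero. -/
lemma mul_diagonal_eq_of_transpose_mul_self_eq_diagonal [DecidableEq n] {M : Matrix m n ℝ}
    {d : n → ℝ} (hM : Mᵀ * M = diagonal d) {f g : n → ℝ} (hfg : ∀ i, d i ≠ 0 → f i = g i) :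
    M * diagonal f = M * diagonal g := by
  ext x i
  simp only [mul_diagonal]
  by_cases hi : d i = 0
  · have hcol : ∑ y, M y i ^ 2 = 0 := by
      simpa [Matrix.mul_apply, sq, hi] using congrFun (congrFun hM i) i
    have : M x i = 0 :=
      pow_eq_zero_iff two_ne_zero |>.mp <|
        (Finset.sum_eq_zero_iff_of_nonneg fun _ _ => sq_nonneg _).mp hcol x (Finset.mem_univ _)
    simp [this]
  · rw [hfg i hi]

lemma frobNorm_mul_le_of_mul_transpose_mul_self (M : Matrix m n ℝ) {Q : Matrix n p ℝ}
    (hQ : Q * Qᵀ * Q = Q) : frobNorm (M * Q) ≤ frobNorm M := by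
  classical
  set P := Q * Qᵀ
  have hP : (1 - P) * (1 - P) = 1 - P := by
    have : P * P = P := by rw [← Matrix.mul_assoc, hQ]
    simp only [Matrix.sub_mul, Matrix.mul_sub, Matrix.one_mul, Matrix.mul_one, this]
    abel
  have hPt : (1 - P)ᵀ = 1 - P := by simp [P, transpose_sub]
  have hMQ : frobNorm (M * Q) ^ 2 = trace (Mᵀ * M * P) := by
    rw [frobNorm_sq_eq_trace, transpose_mul, Matrix.mul_assoc, trace_mul_comm]
    simp only [P, Matrix.mul_assoc]
  have hMP : frobNorm (M * (1 - P)) ^ 2 = frobNorm M ^ 2 - trace (Mᵀ * M * P) := by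
    rw [frobNorm_sq_eq_trace, frobNorm_sq_eq_trace, transpose_mul, hPt, Matrix.mul_assoc,
      trace_mul_comm, Matrix.mul_assoc, Matrix.mul_assoc, hP]
    simp only [Matrix.mul_sub, Matrix.mul_one, trace_sub, Matrix.mul_assoc]
  refine (sq_le_sq₀ (frobNorm_nonneg _) (frobNorm_nonneg _)).mp ?_
  linarith [sq_nonneg (frobNorm (M * (1 - P)))]

lemma transpose_mul_diagonal_mul_mul_diagonal [DecidableEq n] {M : Matrix m n ℝ} {d : n → ℝ}
    (hM : Mᵀ * M = diagonal d) (f g : n → ℝ) :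
    (M * diagonal f)ᵀ * (M * diagonal g) = diagonal fun i => f i * d i * g i := by
  rw [transpose_mul, diagonal_transpose, Matrix.mul_assoc, ← Matrix.mul_assoc Mᵀ, hM,
    diagonal_mul_diagonal, diagonal_mul_diagonal]
  simp only [mul_assoc]

end RealMatrix

namespace Matrix

variable {ι κ : Type*} [Fintype ι] [Fintype κ] [DecidableEq κ] (A : Matrix ι κ ℝ)

def rightSingularVectors : Matrix κ κ ℝ :=
  (isHermitian_conjTranspose_mul_self A).eigenvectorUnitary

def singularValues (i : κ) : ℝ :=
  √((isHermitian_conjTranspose_mul_self A).eigenvalues i)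

lemma singularValues_nonneg (i : κ) : 0 ≤ A.singularValues i := Real.sqrt_nonneg _

lemma nuclearNorm_eq_sum_singularValues : nuclearNorm A = ∑ i, A.singularValues i := rfl

lemma rightSingularVectors_transpose_mul_self :
    A.rightSingularVectorsᵀ * A.rightSingularVectors = 1 := by
  simpa [rightSingularVectors, star_eq_conjTranspose] using
    Unitary.coe_star_mul_self (isHermitian_conjTranspose_mul_self A).eigenvectorUnitary

lemma rightSingularVectors_mul_transpose_self :
    A.rightSingularVectors * A.rightSingularVectorsᵀ = 1 := by
  simpa [rightSingularVectors, star_eq_conjTranspose] using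
    Unitary.coe_mul_star_self (isHermitian_conjTranspose_mul_self A).eigenvectorUnitary

lemma transpose_mul_self_mul_rightSingularVectors :
    (A * A.rightSingularVectors)ᵀ * (A * A.rightSingularVectors) =
      diagonal fun i => A.singularValues i ^ 2 := by
  have h := (isHermitian_conjTranspose_mul_self A).conjStarAlgAut_star_eigenvectorUnitary
  simp only [Unitary.conjStarAlgAut_star_apply, RCLike.ofReal_real_eq_id, Function.id_comp,
    star_eq_conjTranspose, conjTranspose_eq_transpose_of_trivial] at h
  simp only [singularValues, Real.sq_sqrt (eigenvalues_conjTranspose_mul_self_nonneg A _)]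
  rw [← h, transpose_mul, rightSingularVectors]
  simp only [Matrix.mul_assoc]
  rfl

lemma two_mul_nuclearNorm_mul_transpose_le {J : Type*} [Fintype J] (U : Matrix ι J ℝ)
    (V : Matrix κ J ℝ) : 2 * nuclearNorm (U * Vᵀ) ≤ frobNorm U ^ 2 + frobNorm V ^ 2 := by
  set A := U * Vᵀ
  have hAE := A.transpose_mul_self_mul_rightSingularVectors
  -- the nonzero columns of `Q` are the left singular vectors of `A`, so `trace (Qᵀ A E) = ∑ σᵢ`
  set Q := A * A.rightSingularVectors * diagonal fun i => (A.singularValues i)⁻¹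
  have hQ : Q * Qᵀ * Q = Q := by
    rw [Matrix.mul_assoc, transpose_mul_diagonal_mul_mul_diagonal hAE, Matrix.mul_assoc,
      diagonal_mul_diagonal]
    refine mul_diagonal_eq_of_transpose_mul_self_eq_diagonal hAE fun i hi => ?_
    have : A.singularValues i ≠ 0 := by simpa using hi
    field_simp
  have hnuc : nuclearNorm A = trace ((Uᵀ * Q)ᵀ * (Vᵀ * A.rightSingularVectors)) := by
    rw [transpose_mul, transpose_transpose, Matrix.mul_assoc, ← Matrix.mul_assoc U,
      ← Matrix.mul_one (A * _), ← diagonal_one, transpose_mul_diagonal_mul_mul_diagonal hAE,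
      trace_diagonal, nuclearNorm_eq_sum_singularValues]
    refine Finset.sum_congr rfl fun i _ => ?_
    rcases eq_or_ne (A.singularValues i) 0 with h | h
    · simp [h]
    · field_simp
  calc 2 * nuclearNorm A ≤ frobNorm (Uᵀ * Q) ^ 2 + frobNorm (Vᵀ * A.rightSingularVectors) ^ 2 :=
        hnuc ▸ two_mul_trace_transpose_mul_le _ _
    _ ≤ frobNorm U ^ 2 + frobNorm V ^ 2 := by
        rw [frobNorm_mul_of_mul_transpose_eq_one _ A.rightSingularVectors_mul_transpose_self,
          frobNorm_transpose]
        gcongr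
        · exact frobNorm_nonneg _
        · rw [← frobNorm_transpose U]
          exact frobNorm_mul_le_of_mul_transpose_mul_self _ hQ

/-- The witness is the balanced SVD factorization `A = (A E Σ^{-1/2}) (E Σ^{1/2})ᵀ`, moved to the
inner index `J` by a partial isometry `P`. -/
lemma exists_mul_transpose_eq_of_card_le {J : Type*} [Fintype J]
    (h : Fintype.card κ ≤ Fintype.card J) :
    ∃ (U : Matrix ι J ℝ) (V : Matrix κ J ℝ),
      U * Vᵀ = A ∧ frobNorm U ^ 2 + frobNorm V ^ 2 = 2 * nuclearNorm A := by
  obtain ⟨P, hP⟩ := exists_mul_transpose_eq_one (p := J) h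
  have hAE := A.transpose_mul_self_mul_rightSingularVectors
  have hE := A.rightSingularVectors_transpose_mul_self
  set E := A.rightSingularVectors
  set r : κ → ℝ := fun i => √(A.singularValues i)
  have hr : ∀ i, r i ^ 2 = A.singularValues i := fun i => Real.sq_sqrt (singularValues_nonneg A i)
  refine ⟨A * E * diagonal (fun i => (r i)⁻¹) * P, E * diagonal r * P, ?_, ?_⟩
  · calc A * E * diagonal (fun i => (r i)⁻¹) * P * (E * diagonal r * P)ᵀ
        = A * E * diagonal (fun i => (r i)⁻¹ * r i) * Eᵀ := by
          simp only [transpose_mul, diagonal_transpose, Matrix.mul_assoc]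
          rw [← Matrix.mul_assoc P, hP, Matrix.one_mul, ← Matrix.mul_assoc (diagonal _),
            diagonal_mul_diagonal]
      _ = A * E * Eᵀ := by
          have hr0 : ∀ i, A.singularValues i ^ 2 ≠ 0 → (r i)⁻¹ * r i = 1 := fun i hi => by
            have : r i ≠ 0 := by simpa [r, Real.sqrt_eq_zero (singularValues_nonneg A i)] using hi
            simp [this]
          rw [mul_diagonal_eq_of_transpose_mul_self_eq_diagonal hAE (g := fun _ => 1) hr0,
            diagonal_one, Matrix.mul_one]
      _ = A := by rw [Matrix.mul_assoc, A.rightSingularVectors_mul_transpose_self, Matrix.mul_one]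
  · have hV := transpose_mul_diagonal_mul_mul_diagonal (hE.trans diagonal_one.symm) r r
    rw [frobNorm_mul_of_mul_transpose_eq_one _ hP, frobNorm_mul_of_mul_transpose_eq_one _ hP,
      frobNorm_sq_eq_trace, frobNorm_sq_eq_trace, transpose_mul_diagonal_mul_mul_diagonal hAE, hV,
      trace_diagonal, trace_diagonal, nuclearNorm_eq_sum_singularValues, Finset.mul_sum,
      ← Finset.sum_add_distrib]
    refine Finset.sum_congr rfl fun i _ => ?_
    rw [← hr]
    rcases eq_or_ne (r i) 0 with h | h
    · simp [h]
    · field_simp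
      ring

lemma nuclearNorm_transpose_le [DecidableEq ι] : nuclearNorm Aᵀ ≤ nuclearNorm A := by
  obtain ⟨U, V, rfl, hUV⟩ := A.exists_mul_transpose_eq_of_card_le (J := κ) le_rfl
  have := two_mul_nuclearNorm_mul_transpose_le V U
  rw [transpose_mul, transpose_transpose]
  linarith

lemma nuclearNorm_transpose [DecidableEq ι] : nuclearNorm Aᵀ = nuclearNorm A :=
  le_antisymm A.nuclearNorm_transpose_le (by simpa using Aᵀ.nuclearNorm_transpose_le)

lemma exists_mul_transpose_eq_of_min_card_le [DecidableEq ι] {J : Type*} [Fintype J]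
    (h : min (Fintype.card ι) (Fintype.card κ) ≤ Fintype.card J) :
    ∃ (U : Matrix ι J ℝ) (V : Matrix κ J ℝ),
      U * Vᵀ = A ∧ frobNorm U ^ 2 + frobNorm V ^ 2 = 2 * nuclearNorm A := by
  rcases min_le_iff.mp h with h | h
  · obtain ⟨U, V, hUV, hnorm⟩ := Aᵀ.exists_mul_transpose_eq_of_card_le h
    refine ⟨V, U, ?_, ?_⟩
    · rw [← transpose_transpose A, ← hUV, transpose_mul, transpose_transpose]
    · rw [add_comm, hnorm, nuclearNorm_transpose]
  · exact A.exists_mul_transpose_eq_of_card_le h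

end Matrix

lemma BddBelow.range_of_forall_exists_le {α ι ι' : Type*} [Preorder α] {f : ι → α}
    {g : ι' → α} (hf : BddBelow (Set.range f)) (h : ∀ i', ∃ i, f i ≤ g i') :
    BddBelow (Set.range g) :=
  let ⟨a, ha⟩ := hf
  ⟨a, Set.forall_mem_range.2 fun i' => (h i').elim fun i hi => (ha (Set.mem_range_self i)).trans hi⟩

lemma ciInf_eq_ciInf_of_forall_exists_le {α ι ι' : Type*} [ConditionallyCompleteLinearOrder α]
    [Nonempty ι] [Nonempty ι'] {f : ι → α} {g : ι' → α} (hfg : ∀ i, ∃ i', g i' ≤ f i)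
    (hgf : ∀ i', ∃ i, f i ≤ g i') : ⨅ i, f i = ⨅ i', g i' := by
  by_cases hf : BddBelow (Set.range f)
  · exact le_antisymm (ciInf_mono_of_forall_exists hf hgf)
      (ciInf_mono_of_forall_exists (hf.range_of_forall_exists_le hgf) hfg)
  · have hg : ¬BddBelow (Set.range g) := fun hg => hf (hg.range_of_forall_exists_le hfg)
    rw [iInf, iInf, csInf_of_not_bddBelow hf, csInf_of_not_bddBelow hg]

theorem iInf_add_frobNorm_sq_eq_iInf_add_nuclearNorm {o J : Type*} [Fintype o] [Fintype J]
    {ι κ : o → Type*} [∀ b, Fintype (ι b)] [∀ b, Fintype (κ b)]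
    [∀ b, DecidableEq (ι b)] [∀ b, DecidableEq (κ b)]
    (hJ : ∀ b, min (Fintype.card (ι b)) (Fintype.card (κ b)) ≤ Fintype.card J)
    (Φ : (∀ b, Matrix (ι b) (κ b) ℝ) → ℝ) {β : ℝ} (hβ : 0 ≤ β) :
    ⨅ UV : (∀ b, Matrix (ι b) J ℝ) × (∀ b, Matrix (κ b) J ℝ),
        Φ (fun b => UV.1 b * (UV.2 b)ᵀ) +
          β / 2 * ∑ b, (frobNorm (UV.1 b) ^ 2 + frobNorm (UV.2 b) ^ 2) =
      ⨅ Z : ∀ b, Matrix (ι b) (κ b) ℝ, Φ Z + β * ∑ b, nuclearNorm (Z b) := by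
  refine ciInf_eq_ciInf_of_forall_exists_le (fun UV => ⟨_, add_le_add le_rfl ?_⟩) fun Z => ?_
  · rw [Finset.mul_sum, Finset.mul_sum]
    refine Finset.sum_le_sum fun b _ => ?_
    have := mul_le_mul_of_nonneg_left
      ((UV.1 b).two_mul_nuclearNorm_mul_transpose_le (UV.2 b)) hβ
    linarith
  · choose U V hUV hnorm using fun b => (Z b).exists_mul_transpose_eq_of_min_card_le (hJ b)
    refine ⟨(U, V), le_of_eq ?_⟩
    simp only [hUV, hnorm, ← Finset.mul_sum]
    ring

section BlockDiagonal

variable {o : Type*} {d : o → Type*}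

def stackedBlockRowsEquiv (J p R : Type*) :
    (J → Matrix (Σ b, d b) p R) ≃ ∀ b, Matrix (d b × p) J R where
  toFun W b := of fun lq j => W j ⟨b, lq.1⟩ lq.2
  invFun V j := of fun l q => V l.1 (l.2, q) j
  left_inv _ := rfl
  right_inv _ := rfl

@[simp]
lemma stackedBlockRowsEquiv_apply {J p R : Type*} (W : J → Matrix (Σ b, d b) p R) (b : o)
    (l : d b) (q : p) (j : J) : stackedBlockRowsEquiv J p R W b (l, q) j = W j ⟨b, l⟩ q :=
  rfl

variable [Fintype o] [∀ b, Fintype (d b)]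

lemma sum_sigma_sum_sigma_of_ne_eq_zero {M : Type*} [AddCommMonoid M]
    {f : (Σ b, d b) → (Σ b, d b) → M} (hf : ∀ k l, k.1 ≠ l.1 → f k l = 0) :
    ∑ k, ∑ l, f k l = ∑ b, ∑ k, ∑ l, f ⟨b, k⟩ ⟨b, l⟩ := by
  rw [Fintype.sum_sigma]
  refine Finset.sum_congr rfl fun b _ => Finset.sum_congr rfl fun k _ => ?_
  rw [Fintype.sum_sigma, Finset.sum_eq_single b (fun b' _ hb' =>
    Finset.sum_eq_zero fun l _ => hf _ _ (Ne.symm hb')) (by simp)]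

variable {J n p R : Type*} [Fintype J]

lemma sum_transpose_mul_mul_eq_sum_smul_of_blockDiagonal [CommSemiring R]
    {G : Matrix (Σ b, d b) (Σ b, d b) R} (hG : ∀ k l, k.1 ≠ l.1 → G k l = 0)
    (W₁ : J → Matrix (Σ b, d b) n R) (W₂ : J → Matrix (Σ b, d b) p R) :
    ∑ j, (W₁ j)ᵀ * G * W₂ j =
      ∑ b, ∑ k, ∑ l, G ⟨b, k⟩ ⟨b, l⟩ • of fun a q =>
        (stackedBlockRowsEquiv J n R W₁ b * (stackedBlockRowsEquiv J p R W₂ b)ᵀ) (k, a) (l, q) := by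
  ext a q
  calc (∑ j, (W₁ j)ᵀ * G * W₂ j) a q
      = ∑ k, ∑ l, ∑ j, W₁ j k a * G k l * W₂ j l q := by
        simp only [Matrix.sum_apply, Matrix.mul_apply, transpose_apply, Finset.sum_mul]
        rw [Finset.sum_comm]
        exact (Finset.sum_congr rfl fun _ _ => Finset.sum_comm).trans Finset.sum_comm
    _ = ∑ b, ∑ k, ∑ l, ∑ j, W₁ j ⟨b, k⟩ a * G ⟨b, k⟩ ⟨b, l⟩ * W₂ j ⟨b, l⟩ q :=
        sum_sigma_sum_sigma_of_ne_eq_zero fun k l hkl => by simp [hG k l hkl]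
    _ = _ := by
        simp only [Matrix.sum_apply, Matrix.mul_apply, transpose_apply, Matrix.smul_apply, of_apply,
          smul_eq_mul, stackedBlockRowsEquiv_apply, Finset.mul_sum]
        refine Finset.sum_congr rfl fun b _ => Finset.sum_congr rfl fun k _ =>
          Finset.sum_congr rfl fun l _ => Finset.sum_congr rfl fun j _ => by ring

lemma sum_frobNorm_sq_stackedBlockRowsEquiv [Fintype p] (W : J → Matrix (Σ b, d b) p ℝ) :
    ∑ b, frobNorm (stackedBlockRowsEquiv J p ℝ W b) ^ 2 = ∑ j, frobNorm (W j) ^ 2 := by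
  simp only [frobNorm_sq, Fintype.sum_prod_type, stackedBlockRowsEquiv_apply]
  rw [Finset.sum_comm, Fintype.sum_sigma]
  exact Finset.sum_congr rfl fun b _ => Finset.sum_congr rfl fun l _ => Finset.sum_comm

end BlockDiagonal

theorem linear_self_attention_convex_dual_block_diagonal_general
    (n s c B : ℕ)
    (db : Fin B → ℕ)
    (β : ℝ) (hβ : 0 < β)
    (X : Fin n → Matrix (Fin s) (Σ b : Fin B, Fin (db b)) ℝ)
    (Y : Fin n → Matrix (Fin s) (Fin c) ℝ)
    (L : Matrix (Fin s) (Fin c) ℝ → Matrix (Fin s) (Fin c) ℝ → ℝ)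
    (hblock : ∀ (i : Fin n) (k l : Σ b : Fin B, Fin (db b)),
      k.1 ≠ l.1 → ((X i)ᵀ * X i) k l = 0) :
    ∃ mstar : ℕ, mstar ≤ min ((∑ b, db b) * (∑ b, db b)) ((∑ b, db b) * c) ∧
      ∀ m : ℕ, mstar ≤ m →
      (⨅ W : (Fin m → Matrix (Σ b : Fin B, Fin (db b)) (Σ b : Fin B, Fin (db b)) ℝ) ×
              (Fin m → Matrix (Σ b : Fin B, Fin (db b)) (Fin c) ℝ),
        (∑ i, L (∑ j, X i * W.1 j * (X i)ᵀ * (X i) * W.2 j) (Y i)) +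
          (β / 2) * ∑ j, (frobNorm (W.1 j) ^ 2 + frobNorm (W.2 j) ^ 2))
      =
      (⨅ Z : (b : Fin B) → Matrix (Fin (db b) × (Σ b' : Fin B, Fin (db b')))
              (Fin (db b) × Fin c) ℝ,
        (∑ i, L (∑ b : Fin B, ∑ k : Fin (db b), ∑ l : Fin (db b),
            ((X i)ᵀ * X i) ⟨b, k⟩ ⟨b, l⟩ •
              (X i * Matrix.of fun a p => Z b (k, a) (l, p))) (Y i)) +
          β * ∑ b, nuclearNorm (Z b)) := by
  refine ⟨_, le_rfl, fun m hm => ?_⟩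
  have hrank : ∀ b, min (Fintype.card (Fin (db b) × Σ b' : Fin B, Fin (db b')))
      (Fintype.card (Fin (db b) × Fin c)) ≤ Fintype.card (Fin m) := fun b => by
    have : db b ≤ ∑ b, db b := Finset.single_le_sum (fun _ _ => Nat.zero_le _) (Finset.mem_univ b)
    simp only [Fintype.card_prod, Fintype.card_fin, Fintype.card_sigma]
    exact le_trans (min_le_min (Nat.mul_le_mul_right _ this) (Nat.mul_le_mul_right _ this)) hm
  refine Eq.trans ?_ (iInf_add_frobNorm_sq_eq_iInf_add_nuclearNorm hrank _ hβ.le)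
  set S := stackedBlockRowsEquiv (d := fun b : Fin B => Fin (db b)) (Fin m)
  refine Function.Surjective.iInf_congr (fun W => (S _ ℝ fun j => (W.1 j)ᵀ, S (Fin c) ℝ W.2))
    (fun UV => ⟨(fun j => ((S _ ℝ).symm UV.1 j)ᵀ, (S _ ℝ).symm UV.2), by simp⟩) fun W => ?_
  have hmodel : ∀ i, ∑ j, X i * W.1 j * (X i)ᵀ * X i * W.2 j =
      ∑ b, ∑ k, ∑ l, ((X i)ᵀ * X i) ⟨b, k⟩ ⟨b, l⟩ • (X i * of fun a p =>
        (S _ ℝ (fun j => (W.1 j)ᵀ) b * (S (Fin c) ℝ W.2 b)ᵀ) (k, a) (l, p)) := fun i => by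
    have := congrArg (X i * ·) <|
      sum_transpose_mul_mul_eq_sum_smul_of_blockDiagonal (hblock i) (fun j => (W.1 j)ᵀ) W.2
    simpa only [transpose_transpose, Matrix.mul_sum, Matrix.mul_smul, Matrix.mul_assoc] using this
  have hreg : ∑ j, (frobNorm (W.1 j) ^ 2 + frobNorm (W.2 j) ^ 2) =
      ∑ b, (frobNorm (S _ ℝ (fun j => (W.1 j)ᵀ) b) ^ 2 + frobNorm (S (Fin c) ℝ W.2 b) ^ 2) := by
    have hW₁ := sum_frobNorm_sq_stackedBlockRowsEquiv fun j => (W.1 j)ᵀ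
    simp only [frobNorm_transpose] at hW₁
    rw [Finset.sum_add_distrib, Finset.sum_add_distrib, ← hW₁,
      ← sum_frobNorm_sq_stackedBlockRowsEquiv W.2]
  simp only [hmodel, hreg]

/-- **Corollary 1 (linear self-attention with block-diagonal Gram matrices).**
The feature index set `{1,…,d}` is partitioned into `B` blocks of sizes `db b`,
encoded as the sigma type `Σ b, Fin (db b)`; `d = ∑ b, db b`. If every Gram
matrix `Gᵢ = Xᵢᵀ Xᵢ` vanishes off the diagonal blocks, the convex program
separates over the blocks. -/
theorem linear_self_attention_convex_dual_block_diagonal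
    (n s c B : ℕ) (hn : 0 < n) (hs : 0 < s) (hc : 0 < c) (hB : 0 < B)
    (db : Fin B → ℕ) (hdb : ∀ b, 0 < db b)
    (β : ℝ) (hβ : 0 < β)
    (X : Fin n → Matrix (Fin s) (Σ b : Fin B, Fin (db b)) ℝ)
    (Y : Fin n → Matrix (Fin s) (Fin c) ℝ)
    (L : Matrix (Fin s) (Fin c) ℝ → Matrix (Fin s) (Fin c) ℝ → ℝ)
    (hconv : ∀ Yi, ConvexOn ℝ Set.univ fun R => L R Yi)
    (hlsc : ∀ Yi, LowerSemicontinuous fun R => L R Yi)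
    (hblock : ∀ (i : Fin n) (k l : Σ b : Fin B, Fin (db b)),
      k.1 ≠ l.1 → ((X i)ᵀ * X i) k l = 0) :
    ∃ mstar : ℕ, mstar ≤ min ((∑ b, db b) * (∑ b, db b)) ((∑ b, db b) * c) ∧
      ∀ m : ℕ, mstar ≤ m →
      (⨅ W : (Fin m → Matrix (Σ b : Fin B, Fin (db b)) (Σ b : Fin B, Fin (db b)) ℝ) ×
              (Fin m → Matrix (Σ b : Fin B, Fin (db b)) (Fin c) ℝ),
        (∑ i, L (∑ j, X i * W.1 j * (X i)ᵀ * (X i) * W.2 j) (Y i)) +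
          (β / 2) * ∑ j, (frobNorm (W.1 j) ^ 2 + frobNorm (W.2 j) ^ 2))
      =
      (⨅ Z : (b : Fin B) → Matrix (Fin (db b) × (Σ b' : Fin B, Fin (db b')))
              (Fin (db b) × Fin c) ℝ,
        (∑ i, L (∑ b : Fin B, ∑ k : Fin (db b), ∑ l : Fin (db b),
            ((X i)ᵀ * X i) ⟨b, k⟩ ⟨b, l⟩ •
              (X i * Matrix.of fun a p => Z b (k, a) (l, p))) (Y i)) +
          β * ∑ b, nuclearNorm (Z b)) :=
  linear_self_attention_convex_dual_block_diagonal_general n s c B db β hβ X Y L hblock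
end
end

section
/- Let h : ℝ^{s×d} → ℝ^{s×d} be an arbitrary fixed function (e.g. a pooling or 2D Fourier mixing map). For each m, let p(m) be the infimum over vectors w_{1j} ∈ ℝ^d and w_{2j} ∈ ℝ^c (j = 1,…,m) of Σ_{i=1}^n L(Σ_{j=1}^m (h(X_i) w_{1j}) w_{2j}ᵀ, Y_i) + (β/2) Σ_{j=1}^m (‖w_{1j}‖₂² + ‖w_{2j}‖₂²). Then there exists m* ≤ min{d, c} such that for every m ≥ m*, p(m) equals the infimum over Z ∈ ℝ^{d×c} of Σ_{i=1}^n L(h(X_i) Z, Y_i) + β‖Z‖_*. -/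
open Matrix Pointwise Kronecker

noncomputable section

/-!
The loss sees the factors only through `Z = ∑ⱼ w₁ⱼ w₂ⱼᵀ`, because
`h(Xᵢ) Z = ∑ⱼ (h(Xᵢ) w₁ⱼ) w₂ⱼᵀ`. So the theorem is the variational formula
`‖Z‖_* = min ∑ⱼ (‖uⱼ‖² + ‖vⱼ‖²) / 2` over decompositions `Z = ∑ⱼ uⱼ vⱼᵀ` into `m ≥ rank Z` terms.
For the lower bound write `σᵢ = aᵢᵀ Z bᵢ` with the singular vectors of `Z`, expand `Z`, and apply
`xy ≤ (x² + y²) / 2` and Bessel's inequality for the orthonormal families `(aᵢ)` and `(bᵢ)`.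
The bound is attained by the balanced factors `uᵢ = σᵢ^{-1/2} Z bᵢ`, `vᵢ = σᵢ^{1/2} bᵢ`, of which
only `rank Z ≤ min d c` are nonzero; hence `m* = min d c`.
-/

open Finset

theorem Function.Embedding.sum_comp_extend_of_eq_zero {ι κ α M : Type*} [Fintype ι] [Fintype κ]
    [Zero α] [AddCommMonoid M] {p : ι → Prop} (e : {i // p i} ↪ κ)
    (f : ι → α) (hf : ∀ i, ¬ p i → f i = 0) (F : α → M) (hF : F 0 = 0) :
    ∑ j, F (Function.extend e (fun i => f i) 0 j) = ∑ i, F (f i) := by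
  classical
  calc ∑ j, F (Function.extend e (fun i => f i) 0 j)
      = ∑ j ∈ univ.map e, F (Function.extend e (fun i => f i) 0 j) := by
        refine (Finset.sum_subset (subset_univ _) fun j _ hj => ?_).symm
        rw [Function.extend_apply' _ _ _ fun ⟨i, hi⟩ => hj (hi ▸ mem_map_of_mem e (mem_univ i)),
          Pi.zero_apply, hF]
    _ = ∑ i : {i // p i}, F (f i) := by simp [e.injective.extend_apply]
    _ = ∑ i, F (f i) := by
        rw [← Finset.sum_subtype (univ.filter p) (by simp) (fun i => F (f i)), sum_filter_of_ne]
        exact fun i _ hi => by_contra fun hpi => hi (by rw [hf i hpi, hF])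

theorem BddBelow.range_of_forall_exists_le_s15 {α β γ : Type*} [Preorder γ] {f : α → γ}
    {g : β → γ} (hf : BddBelow (Set.range f)) (hgf : ∀ b, ∃ a, f a ≤ g b) :
    BddBelow (Set.range g) :=
  let ⟨t, ht⟩ := hf
  ⟨t, Set.forall_mem_range.2 fun b => (hgf b).elim fun a ha => (ht (Set.mem_range_self a)).trans ha⟩

theorem Real.iInf_eq_iInf_of_forall_exists_le {α β : Type*} [Nonempty α] [Nonempty β]
    {f : α → ℝ} {g : β → ℝ} (hfg : ∀ a, ∃ b, g b ≤ f a) (hgf : ∀ b, ∃ a, f a ≤ g b) :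
    ⨅ a, f a = ⨅ b, g b := by
  by_cases hf : BddBelow (Set.range f)
  · exact le_antisymm (ciInf_mono_of_forall_exists hf hgf)
      (ciInf_mono_of_forall_exists (hf.range_of_forall_exists_le_s15 hgf) hfg)
  · have hg : ¬ BddBelow (Set.range g) := fun hg => hf (hg.range_of_forall_exists_le_s15 hfg)
    rw [Real.iInf_of_not_bddBelow hf, Real.iInf_of_not_bddBelow hg]

theorem Matrix.sum_sq_dotProduct_le_dotProduct_self {ι κ : Type*} [Fintype ι] [Fintype κ]
    (w : ι → κ → ℝ) (horth : Pairwise fun i k => w i ⬝ᵥ w k = 0) (hnorm : ∀ i, w i ⬝ᵥ w i ≤ 1)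
    (u : κ → ℝ) : ∑ i, (w i ⬝ᵥ u) ^ 2 ≤ u ⬝ᵥ u := by
  set S := ∑ i, (w i ⬝ᵥ u) ^ 2
  set v := ∑ i, (w i ⬝ᵥ u) • w i
  have hu_v : u ⬝ᵥ v = S := by
    simp only [v, S, dotProduct_sum, dotProduct_smul, smul_eq_mul, sq]
    exact sum_congr rfl fun i _ => by rw [dotProduct_comm]
  have hv_v : v ⬝ᵥ v ≤ S := calc
    v ⬝ᵥ v = ∑ i, (w i ⬝ᵥ u) ^ 2 * (w i ⬝ᵥ w i) := by
      simp only [v, sum_dotProduct, dotProduct_sum, smul_dotProduct, dotProduct_smul, smul_eq_mul]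
      refine sum_congr rfl fun i _ => ?_
      rw [sum_eq_single i (fun k _ hki => by rw [horth hki]; ring) (by simp)]
      ring
    _ ≤ S := sum_le_sum fun i _ => mul_le_of_le_one_right (sq_nonneg _) (hnorm i)
  have hexpand : (u - v) ⬝ᵥ (u - v) = u ⬝ᵥ u - 2 * (u ⬝ᵥ v) + v ⬝ᵥ v := by
    rw [sub_dotProduct, dotProduct_sub, dotProduct_sub, dotProduct_comm v u]
    ring
  have hnonneg : 0 ≤ (u - v) ⬝ᵥ (u - v) := by
    simpa using dotProduct_self_star_nonneg (u - v)
  linarith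

namespace Matrix

variable {m n : Type*} [Fintype m] [Fintype n] [DecidableEq n] (Z : Matrix m n ℝ)

def rightSingularVector (i : n) : n → ℝ :=
  ⇑((isHermitian_conjTranspose_mul_self Z).eigenvectorBasis i)

def singularValue (i : n) : ℝ :=
  √((isHermitian_conjTranspose_mul_self Z).eigenvalues i)

/-- Zero when `Z.singularValue i = 0`, since `0⁻¹ = 0`. -/
def leftSingularVector (i : n) : m → ℝ :=
  (Z.singularValue i)⁻¹ • (Z *ᵥ Z.rightSingularVector i)

theorem nuclearNorm_eq_sum_singularValue : nuclearNorm Z = ∑ i, Z.singularValue i := rfl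

theorem singularValue_nonneg (i : n) : 0 ≤ Z.singularValue i := Real.sqrt_nonneg _

theorem sq_singularValue (i : n) :
    Z.singularValue i ^ 2 = (isHermitian_conjTranspose_mul_self Z).eigenvalues i :=
  Real.sq_sqrt ((posSemidef_conjTranspose_mul_self Z).eigenvalues_nonneg i)

theorem rightSingularVector_dotProduct (i k : n) :
    Z.rightSingularVector i ⬝ᵥ Z.rightSingularVector k = if i = k then 1 else 0 := by
  simpa [rightSingularVector, EuclideanSpace.inner_eq_star_dotProduct, dotProduct_comm] using
    orthonormal_iff_ite.mp (isHermitian_conjTranspose_mul_self Z).eigenvectorBasis.orthonormal i k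

theorem conjTranspose_mul_self_mulVec_rightSingularVector (i : n) :
    (Zᴴ * Z) *ᵥ Z.rightSingularVector i = Z.singularValue i ^ 2 • Z.rightSingularVector i := by
  rw [sq_singularValue]
  exact (isHermitian_conjTranspose_mul_self Z).mulVec_eigenvectorBasis i

theorem mulVec_rightSingularVector_dotProduct (i k : n) :
    Z *ᵥ Z.rightSingularVector i ⬝ᵥ Z *ᵥ Z.rightSingularVector k =
      if i = k then Z.singularValue i ^ 2 else 0 := by
  rw [← vecMul_transpose, ← dotProduct_mulVec, mulVec_mulVec,
    ← conjTranspose_eq_transpose_of_trivial, conjTranspose_mul_self_mulVec_rightSingularVector,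
    dotProduct_smul, rightSingularVector_dotProduct]
  split_ifs with h <;> simp [h]

theorem mulVec_rightSingularVector_eq_zero {i : n} (hi : Z.singularValue i = 0) :
    Z *ᵥ Z.rightSingularVector i = 0 := by
  have h := Z.mulVec_rightSingularVector_dotProduct i i
  rw [if_pos rfl, hi, zero_pow two_ne_zero] at h
  exact dotProduct_self_eq_zero.mp h

theorem sum_vecMulVec_mulVec_rightSingularVector :
    ∑ i, vecMulVec (Z *ᵥ Z.rightSingularVector i) (Z.rightSingularVector i) = Z := by
  have hU := Unitary.coe_mul_star_self (isHermitian_conjTranspose_mul_self Z).eigenvectorUnitary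
  have hId : ∑ i, vecMulVec (Z.rightSingularVector i) (Z.rightSingularVector i) = 1 := by
    ext x y
    simpa [sum_apply, vecMulVec_apply, mul_apply, rightSingularVector] using
      congrFun (congrFun hU x) y
  conv_rhs => rw [← Matrix.mul_one Z, ← hId, Matrix.mul_sum]
  simp_rw [mul_vecMulVec]

theorem card_singularValue_ne_zero_le :
    Fintype.card {i // Z.singularValue i ≠ 0} ≤ min (Fintype.card m) (Fintype.card n) := by
  have hrank : Fintype.card {i // Z.singularValue i ≠ 0} = Z.rank := by
    rw [← rank_conjTranspose_mul_self,
      (isHermitian_conjTranspose_mul_self Z).rank_eq_card_non_zero_eigs]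
    exact Fintype.card_congr <| Equiv.subtypeEquivRight fun i => by rw [← sq_singularValue]; simp
  exact hrank ▸ le_min Z.rank_le_card_height Z.rank_le_card_width

theorem leftSingularVector_dotProduct (i k : n) :
    Z.leftSingularVector i ⬝ᵥ Z.leftSingularVector k =
      if i = k ∧ Z.singularValue i ≠ 0 then 1 else 0 := by
  rw [leftSingularVector, leftSingularVector, smul_dotProduct, dotProduct_smul,
    mulVec_rightSingularVector_dotProduct]
  rcases eq_or_ne i k with rfl | hik
  · rcases eq_or_ne (Z.singularValue i) 0 with hi | hi
    · simp [hi]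
    · simp only [ne_eq, hi, not_false_eq_true, and_self, if_true, smul_eq_mul]
      field_simp
  · simp [hik]

theorem leftSingularVector_dotProduct_mulVec (i : n) :
    Z.leftSingularVector i ⬝ᵥ Z *ᵥ Z.rightSingularVector i = Z.singularValue i := by
  rw [leftSingularVector, smul_dotProduct, mulVec_rightSingularVector_dotProduct, if_pos rfl,
    smul_eq_mul]
  rcases eq_or_ne (Z.singularValue i) 0 with hi | hi
  · simp [hi]
  · field_simp

theorem sum_leftSingularVector_dotProduct_mul_le (u : m → ℝ) (v : n → ℝ) :
    ∑ i, (Z.leftSingularVector i ⬝ᵥ u) * (v ⬝ᵥ Z.rightSingularVector i) ≤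
      (u ⬝ᵥ u + v ⬝ᵥ v) / 2 := by
  have hleft := sum_sq_dotProduct_le_dotProduct_self Z.leftSingularVector
    (fun i k hik => by simp [leftSingularVector_dotProduct, hik])
    (fun i => by rw [leftSingularVector_dotProduct]; split_ifs <;> norm_num) u
  have hright := sum_sq_dotProduct_le_dotProduct_self Z.rightSingularVector
    (fun i k hik => by simp [rightSingularVector_dotProduct, hik])
    (fun i => by simp [rightSingularVector_dotProduct]) v
  calc ∑ i, (Z.leftSingularVector i ⬝ᵥ u) * (v ⬝ᵥ Z.rightSingularVector i)
      ≤ ∑ i, ((Z.leftSingularVector i ⬝ᵥ u) ^ 2 + (Z.rightSingularVector i ⬝ᵥ v) ^ 2) / 2 :=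
        sum_le_sum fun i _ => by
          rw [dotProduct_comm v]
          linarith [two_mul_le_add_sq (Z.leftSingularVector i ⬝ᵥ u) (Z.rightSingularVector i ⬝ᵥ v)]
    _ ≤ (u ⬝ᵥ u + v ⬝ᵥ v) / 2 := by rw [← sum_div, sum_add_distrib]; linarith

theorem nuclearNorm_sum_vecMulVec_le {ι : Type*} [Fintype ι] (u : ι → m → ℝ) (v : ι → n → ℝ) :
    nuclearNorm (∑ j, vecMulVec (u j) (v j)) ≤ ∑ j, (u j ⬝ᵥ u j + v j ⬝ᵥ v j) / 2 := by
  set Z := ∑ j, vecMulVec (u j) (v j) with hZ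
  have hσ : ∀ i, Z.singularValue i =
      ∑ j, (Z.leftSingularVector i ⬝ᵥ u j) * (v j ⬝ᵥ Z.rightSingularVector i) := fun i => by
    rw [← leftSingularVector_dotProduct_mulVec, dotProduct_mulVec, hZ, vecMul_sum, sum_dotProduct]
    simp only [vecMul_vecMulVec, smul_dotProduct, smul_eq_mul]
  rw [nuclearNorm_eq_sum_singularValue]
  simp_rw [hσ]
  rw [sum_comm]
  exact sum_le_sum fun j _ => Z.sum_leftSingularVector_dotProduct_mul_le (u j) (v j)

theorem exists_sum_vecMulVec_eq_of_card_le {k : ℕ}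
    (hk : min (Fintype.card m) (Fintype.card n) ≤ k) :
    ∃ (u : Fin k → m → ℝ) (v : Fin k → n → ℝ), ∑ j, vecMulVec (u j) (v j) = Z ∧
      ∑ j, (u j ⬝ᵥ u j + v j ⬝ᵥ v j) / 2 = nuclearNorm Z := by
  set P : n → (m → ℝ) × (n → ℝ) := fun i =>
    ((√(Z.singularValue i))⁻¹ • (Z *ᵥ Z.rightSingularVector i),
      √(Z.singularValue i) • Z.rightSingularVector i)
  have hP0 : ∀ i, ¬ Z.singularValue i ≠ 0 → P i = 0 := fun i hi => by
    simp [P, not_not.mp hi]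
  have hPZ : ∀ i, vecMulVec (P i).1 (P i).2 =
      vecMulVec (Z *ᵥ Z.rightSingularVector i) (Z.rightSingularVector i) := fun i => by
    by_cases hi : Z.singularValue i = 0
    · simp [P, hi, mulVec_rightSingularVector_eq_zero]
    · have hsqrt : √(Z.singularValue i) ≠ 0 :=
        Real.sqrt_ne_zero'.2 ((Z.singularValue_nonneg i).lt_of_ne' hi)
      simp [P, smul_vecMulVec, vecMulVec_smul, smul_smul, hsqrt]
  have hPnorm : ∀ i, ((P i).1 ⬝ᵥ (P i).1 + (P i).2 ⬝ᵥ (P i).2) / 2 = Z.singularValue i := by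
    intro i
    by_cases hi : Z.singularValue i = 0
    · simp [P, hi]
    · simp only [P, smul_dotProduct, dotProduct_smul, mulVec_rightSingularVector_dotProduct,
        rightSingularVector_dotProduct, if_pos, smul_eq_mul]
      have hσ := Z.singularValue_nonneg i
      rw [← mul_assoc, ← mul_inv, Real.mul_self_sqrt hσ, ← mul_assoc, Real.mul_self_sqrt hσ]
      field_simp
      ring
  obtain ⟨e⟩ : Nonempty ({i // Z.singularValue i ≠ 0} ↪ Fin k) :=
    Function.Embedding.nonempty_of_card_le <| by
      simpa using (card_singularValue_ne_zero_le Z).trans hk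
  set g := Function.extend e (fun i => P i) 0
  refine ⟨fun j => (g j).1, fun j => (g j).2, ?_, ?_⟩
  · rw [e.sum_comp_extend_of_eq_zero P hP0 (fun p => vecMulVec p.1 p.2) (by simp)]
    simp_rw [hPZ]
    exact sum_vecMulVec_mulVec_rightSingularVector Z
  · rw [e.sum_comp_extend_of_eq_zero P hP0 (fun p => (p.1 ⬝ᵥ p.1 + p.2 ⬝ᵥ p.2) / 2) (by simp),
      nuclearNorm_eq_sum_singularValue]
    exact sum_congr rfl fun i _ => hPnorm i

theorem iInf_add_sum_sq_eq_iInf_add_nuclearNorm (Φ : Matrix m n ℝ → ℝ) {β : ℝ} (hβ : 0 ≤ β)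
    {k : ℕ} (hk : min (Fintype.card m) (Fintype.card n) ≤ k) :
    ⨅ W : (Fin k → m → ℝ) × (Fin k → n → ℝ), Φ (∑ j, vecMulVec (W.1 j) (W.2 j)) +
        β / 2 * ∑ j, ((∑ r, W.1 j r ^ 2) + (∑ r, W.2 j r ^ 2)) =
      ⨅ Z, Φ Z + β * nuclearNorm Z := by
  simp only [sq, ← dotProduct.eq_1]
  apply Real.iInf_eq_iInf_of_forall_exists_le
  · rintro ⟨u, v⟩
    refine ⟨∑ j, vecMulVec (u j) (v j), ?_⟩
    have := mul_le_mul_of_nonneg_left (nuclearNorm_sum_vecMulVec_le u v) hβ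
    rw [← sum_div] at this
    linarith
  · intro Z
    obtain ⟨u, v, huv, hnorm⟩ := Z.exists_sum_vecMulVec_eq_of_card_le hk
    refine ⟨(u, v), le_of_eq ?_⟩
    rw [huv, ← hnorm, ← sum_div]
    ring

end Matrix

theorem linear_mixer_convex_dual_general
    (n s d c : ℕ)
    (β : ℝ) (hβ : 0 < β)
    (X : Fin n → Matrix (Fin s) (Fin d) ℝ) (Y : Fin n → Matrix (Fin s) (Fin c) ℝ)
    (L : Matrix (Fin s) (Fin c) ℝ → Matrix (Fin s) (Fin c) ℝ → ℝ)
    (h : Matrix (Fin s) (Fin d) ℝ → Matrix (Fin s) (Fin d) ℝ) :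
    ∃ mstar : ℕ, mstar ≤ min d c ∧ ∀ m : ℕ, mstar ≤ m →
      (⨅ W : (Fin m → (Fin d → ℝ)) × (Fin m → (Fin c → ℝ)),
        (∑ i, L (∑ j, Matrix.vecMulVec (h (X i) *ᵥ W.1 j) (W.2 j)) (Y i)) +
          (β / 2) * ∑ j, ((∑ r, (W.1 j r) ^ 2) + (∑ r, (W.2 j r) ^ 2)))
      =
      (⨅ Z : Matrix (Fin d) (Fin c) ℝ,
        (∑ i, L (h (X i) * Z) (Y i)) + β * nuclearNorm Z) := by
  refine ⟨min d c, le_rfl, fun m hm => ?_⟩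
  have hmix : ∀ (A : Matrix (Fin s) (Fin d) ℝ) (W : (Fin m → Fin d → ℝ) × (Fin m → Fin c → ℝ)),
      ∑ j, vecMulVec (A *ᵥ W.1 j) (W.2 j) = A * ∑ j, vecMulVec (W.1 j) (W.2 j) := fun A W => by
    simp only [Matrix.mul_sum, mul_vecMulVec]
  simp only [hmix]
  exact iInf_add_sum_sq_eq_iInf_add_nuclearNorm (fun Z => ∑ i, L (h (X i) * Z) (Y i)) hβ.le
    (by simpa using hm)

/-- **Linear-activation generic token mixer (PoolFormer / FNet style).**
For a fixed mixing map `h` and `m ≥ m*` with `m* ≤ min {d, c}`, the non-convex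
training problem equals a convex program with nuclear-norm regularization. -/
theorem linear_mixer_convex_dual
    (n s d c : ℕ) (hn : 0 < n) (hs : 0 < s) (hd : 0 < d) (hc : 0 < c)
    (β : ℝ) (hβ : 0 < β)
    (X : Fin n → Matrix (Fin s) (Fin d) ℝ) (Y : Fin n → Matrix (Fin s) (Fin c) ℝ)
    (L : Matrix (Fin s) (Fin c) ℝ → Matrix (Fin s) (Fin c) ℝ → ℝ)
    (hconv : ∀ Yi, ConvexOn ℝ Set.univ fun R => L R Yi)
    (hlsc : ∀ Yi, LowerSemicontinuous fun R => L R Yi)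
    (h : Matrix (Fin s) (Fin d) ℝ → Matrix (Fin s) (Fin d) ℝ) :
    ∃ mstar : ℕ, mstar ≤ min d c ∧ ∀ m : ℕ, mstar ≤ m →
      (⨅ W : (Fin m → (Fin d → ℝ)) × (Fin m → (Fin c → ℝ)),
        (∑ i, L (∑ j, Matrix.vecMulVec (h (X i) *ᵥ W.1 j) (W.2 j)) (Y i)) +
          (β / 2) * ∑ j, ((∑ r, (W.1 j r) ^ 2) + (∑ r, (W.2 j r) ^ 2)))
      =
      (⨅ Z : Matrix (Fin d) (Fin c) ℝ,
        (∑ i, L (h (X i) * Z) (Y i)) + β * nuclearNorm Z) :=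
  linear_mixer_convex_dual_general n s d c β hβ X Y L h
end
end
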